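/- arXiv:2408.05318 — 2 statements merged into one kernel-verified Lean document; each statement's English description precedes it below -/
import Mathlib

section
/- Let V be a real vector space and φ : V → V a linear endomorphism satisfying φ² = pφ + qI for real numbers p, q with p² + 4q > 0. Then F := (2/(2σ − p))φ − (p/(2σ − p))I, where σ = (p + √(p² + 4q))/2, satisfies F² = I. -/
/-! Completing the square gives `(2φ - p)² = (p² + 4q)·1`, and `2σ - p = √(p² + 4q)`, so
`F = (2σ - p)⁻¹ • (2φ - p)` squares to the identity. -/

theorem two_smul_sub_smul_one_mul_self_of_mul_self_eq {R A : Type*} [CommRing R] [Ring A]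
    [Algebra R A] {p q : R} {φ : A} (hφ : φ * φ = p • φ + q • 1) :
    ((2 : R) • φ - p • 1) * ((2 : R) • φ - p • 1) = (p ^ 2 + 4 * q) • (1 : A) := by
  simp only [mul_sub, sub_mul, smul_mul_smul_comm, mul_one, one_mul, hφ]
  module

theorem inv_smul_mul_self_eq_one {K A : Type*} [Field K] [Ring A] [Algebra K A] {s : K} {x : A}
    (hs : s ≠ 0) (hx : x * x = s ^ 2 • (1 : A)) : (s⁻¹ • x) * (s⁻¹ • x) = 1 := by
  rw [smul_mul_smul_comm, hx, smul_smul]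
  field_simp
  exact one_smul K 1

theorem metallic_to_almost_product
    (V : Type*) [AddCommGroup V] [Module ℝ V]
    (p q : ℝ) (hpq : p^2 + 4 * q > 0)
    (φ : V →ₗ[ℝ] V)
    (hφ : φ ∘ₗ φ = p • φ + q • LinearMap.id)
    (σ : ℝ) (hσ : σ = (p + Real.sqrt (p^2 + 4 * q)) / 2)
    (F : V →ₗ[ℝ] V)
    (hF : F = (2 / (2 * σ - p)) • φ - (p / (2 * σ - p)) • LinearMap.id) :
    F ∘ₗ F = LinearMap.id := by
  have hs : 2 * σ - p = Real.sqrt (p ^ 2 + 4 * q) := by rw [hσ]; ring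
  have hs_ne : 2 * σ - p ≠ 0 := hs ▸ (Real.sqrt_pos.mpr hpq).ne'
  have hs_sq : (2 * σ - p) ^ 2 = p ^ 2 + 4 * q := hs ▸ Real.sq_sqrt hpq.le
  have hF' : F = (2 * σ - p)⁻¹ • ((2 : ℝ) • φ - p • 1) := by
    rw [hF, smul_sub, smul_smul, smul_smul, div_eq_inv_mul, div_eq_inv_mul,
      Module.End.one_eq_id]
  rw [← Module.End.mul_eq_comp, ← Module.End.one_eq_id, hF']
  refine inv_smul_mul_self_eq_one hs_ne ?_
  rw [hs_sq]
  exact two_smul_sub_smul_one_mul_self_of_mul_self_eq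
    (by rwa [Module.End.mul_eq_comp, Module.End.one_eq_id])
end

section
/- Let V be a real inner product space with inner product g, φ a g-self-adjoint linear map on V with φ² = pφ + qI, and T : W → W a g-self-adjoint linear map on a subspace W of V satisfying T² = cos²θ·(pT + qI_W) for some constant θ; if N is a linear map with g(φX, φY) = g(TX, TY) + g(NX, NY) and g(X, φY) = g(X, TY) for X, Y ∈ W, then g(NX, NY) = sin²θ·(p·g(TX, Y) + q·g(X, Y)) for all X, Y ∈ W. -/
open RealInnerProductSpace

theorem slant_normal_part
    (V : Type*) [NormedAddCommGroup V] [InnerProductSpace ℝ V]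
    (W : Type*) [NormedAddCommGroup W] [InnerProductSpace ℝ W]
    (p q θ : ℝ)
    (φ : V →ₗ[ℝ] V)
    (hsaφ : ∀ X Y : V, ⟪φ X, Y⟫ = ⟪X, φ Y⟫)
    (hφ : φ ∘ₗ φ = p • φ + q • LinearMap.id)
    (incl : W →ₗ[ℝ] V)
    (hincl : ∀ X Y : W, ⟪incl X, incl Y⟫ = ⟪X, Y⟫)
    (T : W →ₗ[ℝ] W)
    (hsaT : ∀ X Y : W, ⟪T X, Y⟫ = ⟪X, T Y⟫)
    (hT : T ∘ₗ T = (Real.cos θ)^2 • (p • T + q • LinearMap.id))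
    (N : W →ₗ[ℝ] V)
    (hsum : ∀ X Y : W, ⟪φ (incl X), φ (incl Y)⟫ = ⟪T X, T Y⟫ + ⟪N X, N Y⟫)
    (htan : ∀ X Y : W, ⟪incl X, φ (incl Y)⟫ = ⟪X, T Y⟫) :
    ∀ X Y : W, ⟪N X, N Y⟫ = (Real.sin θ)^2 * (p * ⟪T X, Y⟫ + q * ⟪X, Y⟫) := by
  intro X Y
  have hφY : φ (φ (incl Y)) = p • φ (incl Y) + q • incl Y := by
    have := congrArg (fun f => f (incl Y)) hφ
    simpa using this
  have hTY : T (T Y) = (Real.cos θ)^2 • (p • T Y + q • Y) := by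
    have := congrArg (fun f => f Y) hT
    simpa using this
  have h1 : ⟪φ (incl X), φ (incl Y)⟫ = p * ⟪X, T Y⟫ + q * ⟪X, Y⟫ := by
    rw [hsaφ, hφY]
    simp [inner_add_right, inner_smul_right, htan, hincl]
  have h2 : ⟪T X, T Y⟫ = (Real.cos θ)^2 * (p * ⟪X, T Y⟫ + q * ⟪X, Y⟫) := by
    rw [hsaT, hTY]
    simp [inner_add_right, inner_smul_right]
    ring
  have h3 := hsum X Y
  rw [h1, h2] at h3
  have hs : (Real.sin θ)^2 = 1 - (Real.cos θ)^2 := by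
    have := Real.sin_sq_add_cos_sq θ; linarith
  rw [hsaT] at *
  rw [hs]; linarith
end
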